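/- If V is a finite-dimensional real vector space with a skew-symmetric bilinear form ω, and W is a codimension-one subspace on which ω restricts to zero, and ω is not identically zero, then the kernel (radical) of ω has codimension one in W. -/

import Mathlib

/-!
Fix `v₀ ∉ W`, so that `V = W ⊕ ℝ v₀`. Since `W` is isotropic, a vector `w ∈ W` lies in the
radical as soon as `B w v₀ = 0`, and `B` vanishes altogether as soon as it vanishes on
`W × V` and at `(v₀, v₀)`. Hence the radical lies in `W` and is the kernel of the functional
`w ↦ B w v₀` on `W`, which is nonzero because `B` is.
-/

open Module Submodule

section

variable {K V M : Type*} [Field K] [AddCommGroup V] [Module K V] [AddCommGroup M] [Module K M]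

theorem Submodule.sup_span_singleton_eq_top_of_finrank_add_one [FiniteDimensional K V]
    {W : Submodule K V} (hW : finrank K W + 1 = finrank K V) {v : V} (hv : v ∉ W) :
    W ⊔ span K {v} = ⊤ :=
  eq_top_of_finrank_eq (by rw [finrank_sup_span_singleton hv, hW])

namespace LinearMap

variable {W : Submodule K V} {v : V}

theorem eq_zero_of_sup_span_singleton_eq_top (hWv : W ⊔ span K {v} = ⊤) {f : V →ₗ[K] M}
    (hW : ∀ w ∈ W, f w = 0) (hv : f v = 0) : f = 0 := by
  rw [← ker_eq_top, eq_top_iff, ← hWv, sup_le_iff, span_singleton_le_iff_mem]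
  exact ⟨hW, hv⟩

variable {B : V →ₗ[K] V →ₗ[K] K} (hiso : ∀ x ∈ W, ∀ y ∈ W, B x y = 0)
include hiso

theorem apply_eq_zero_of_isotropic (hWv : W ⊔ span K {v} = ⊤) {w : V} (hw : w ∈ W)
    (hwv : B w v = 0) : B w = 0 :=
  eq_zero_of_sup_span_singleton_eq_top hWv (hiso w hw) hwv

theorem eq_zero_of_isotropic (hWv : W ⊔ span K {v} = ⊤) (hW : ∀ w ∈ W, B w v = 0)
    (hv : B v = 0) : B = 0 :=
  eq_zero_of_sup_span_singleton_eq_top hWv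
    (fun w hw ↦ apply_eq_zero_of_isotropic hiso hWv hw (hW w hw)) hv

end LinearMap

end

open LinearMap in
/-- If `V` is a finite-dimensional real vector space with a skew-symmetric
bilinear form `B`, and `W` is a codimension-one subspace on which `B`
restricts to zero, and `B` is not identically zero, then the kernel (radical)
of `B` is contained in `W` and has codimension one in `W`. -/
theorem statement0 (V : Type*) [AddCommGroup V] [Module ℝ V] [FiniteDimensional ℝ V]
    (B : V →ₗ[ℝ] V →ₗ[ℝ] ℝ)
    (hskew : ∀ x y : V, B x y = - B y x)
    (W : Submodule ℝ V)
    (hcodim : Module.finrank ℝ W + 1 = Module.finrank ℝ V)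
    (hiso : ∀ x ∈ W, ∀ y ∈ W, B x y = 0)
    (hne : B ≠ 0) :
    LinearMap.ker B ≤ W ∧
      Module.finrank ℝ (LinearMap.ker B) + 1 = Module.finrank ℝ W := by
  have hWv {v : V} (hv : v ∉ W) : W ⊔ span ℝ {v} = ⊤ :=
    sup_span_singleton_eq_top_of_finrank_add_one hcodim hv
  have hker_le : ker B ≤ W := by
    intro v hv
    by_contra hvW
    refine hne (eq_zero_of_isotropic hiso (hWv hvW) (fun w _ ↦ ?_) hv)
    rw [hskew, mem_ker.mp hv, LinearMap.zero_apply, neg_zero]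
  have hW_ne_top : W ≠ ⊤ := by
    rintro rfl
    rw [finrank_top] at hcodim
    omega
  obtain ⟨v₀, -, hv₀⟩ := SetLike.exists_of_lt hW_ne_top.lt_top
  set φ : Dual ℝ W := (B.flip v₀).domRestrict W
  have hφ : φ ≠ 0 := by
    intro hφ
    have hW (w : V) (hw : w ∈ W) : B w v₀ = 0 := LinearMap.congr_fun hφ ⟨w, hw⟩
    refine hne (eq_zero_of_isotropic hiso (hWv hv₀) hW ?_)
    refine eq_zero_of_sup_span_singleton_eq_top (hWv hv₀) (fun w hw ↦ ?_) ?_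
    · rw [hskew, hW w hw, neg_zero]
    · linarith [hskew v₀ v₀]
  have hker : ker φ = (ker B).comap W.subtype := by
    ext w
    refine ⟨fun hw ↦ apply_eq_zero_of_isotropic hiso (hWv hv₀) w.2 hw, fun hw ↦ ?_⟩
    simp [φ, mem_ker.mp (show (w : V) ∈ ker B from hw)]
  refine ⟨hker_le, ?_⟩
  rw [← Dual.finrank_ker_add_one_of_ne_zero hφ, hker,
    (comapSubtypeEquivOfLe hker_le).finrank_eq]
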